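/- arXiv:math/0605547 — 3 statements merged into one kernel-verified Lean document; each statement's English description precedes it below -/
import Mathlib

section
/- Weighted L² bound on the localized heat factor: Let 0 ≤ b ≤ 1/2. There exists C > 0 such that for every ξ ∈ ℝ, ( ∫_ℝ ⟨τ⟩^{2b} | F_t( ψ(t) e^{-|t|ξ²} )(τ) |² dτ )^{1/2} ≤ C ⟨ξ⟩^{2b-1}, where F_t denotes the one-dimensional Fourier transform in the time variable. -/
open MeasureTheory Filter
open scoped ENNReal NNReal

noncomputable section

/-- Japanese bracket `⟨x⟩ = (1+|x|²)^{1/2}`. -/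
def jb (x : ℝ) : ℝ := Real.sqrt (1 + x ^ 2)

/-- KP-II dispersion symbol `P(ξ,η) = ξ³ - η²/ξ`. -/
def Pk (ν : ℝ × ℝ) : ℝ := ν.1 ^ 3 - ν.2 ^ 2 / ν.1

/-- `σ = τ - P(ν)`. -/
def sig (τ : ℝ) (ν : ℝ × ℝ) : ℝ := τ - Pk ν

/-- One-dimensional Fourier transform, with the convention `𝓕g(τ) = ∫ e^{itτ} g(t) dt`. -/
def fourier1 (g : ℝ → ℂ) (τ : ℝ) : ℂ :=
  ∫ t : ℝ, Complex.exp (Complex.I * Complex.ofReal (t * τ)) * g t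

/-- Fourier transform in the time variable of a space-time function which is already
written on the spatial Fourier side; this yields the space-time Fourier transform. -/
def timeFT (u : ℝ → ℝ × ℝ → ℂ) (τ : ℝ) (ν : ℝ × ℝ) : ℂ :=
  fourier1 (fun t => u t ν) τ

/-- Fourier transform in all three variables `(t,x,y) ↦ (τ,ξ,η)`. -/
def ft3 (u : ℝ × ℝ × ℝ → ℂ) (τ : ℝ) (ν : ℝ × ℝ) : ℂ :=
  ∫ p : ℝ × ℝ × ℝ,
    Complex.exp (Complex.I * Complex.ofReal (p.1 * τ + p.2.1 * ν.1 + p.2.2 * ν.2)) * u p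

/-- Inverse Fourier transform in all three variables, applied to a function of `(τ,(ξ,η))`. -/
def invFT3 (F : ℝ → ℝ × ℝ → ℂ) (t : ℝ) (xy : ℝ × ℝ) : ℂ :=
  Complex.ofReal (((2 * Real.pi) ^ 3)⁻¹) *
    ∫ q : ℝ × ℝ × ℝ,
      Complex.exp (-(Complex.I * Complex.ofReal (q.1 * t + q.2.1 * xy.1 + q.2.2 * xy.2))) * F q.1 q.2

/-- Anisotropic Sobolev `H^{s1,s2}` norm, computed on the (spatial) Fourier side. -/
def HnormE (s1 s2 : ℝ) (f : ℝ × ℝ → ℂ) : ℝ≥0∞ :=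
  (∫⁻ ν : ℝ × ℝ,
      ENNReal.ofReal (jb ν.1 ^ (2 * s1) * jb ν.2 ^ (2 * s2)) * (‖f ν‖₊ : ℝ≥0∞) ^ 2) ^ ((1:ℝ)/2)

/-- Weight of the Bourgain space `X^{b,s1,s2}`: `⟨i(τ-P(ν))+ξ²⟩^{2b}⟨ξ⟩^{2s1}⟨η⟩^{2s2}`. -/
def XwE (b s1 s2 : ℝ) (τ : ℝ) (ν : ℝ × ℝ) : ℝ :=
  (1 + |τ - Pk ν| ^ 2 + ν.1 ^ 4) ^ b * jb ν.1 ^ (2 * s1) * jb ν.2 ^ (2 * s2)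

/-- Bourgain `X^{b,s1,s2}` norm of a space-time function written on the spatial Fourier side. -/
def XnormE (b s1 s2 : ℝ) (u : ℝ → ℝ × ℝ → ℂ) : ℝ≥0∞ :=
  (∫⁻ p : ℝ × ℝ × ℝ,
      ENNReal.ofReal (XwE b s1 s2 p.1 p.2) * (‖timeFT u p.1 p.2‖₊ : ℝ≥0∞) ^ 2) ^ ((1:ℝ)/2)

/-- Restricted Bourgain norm `X_T^{b,s1,s2}` (infimum over extensions off `[0,T]`). -/
def XTnormE (b s1 s2 T : ℝ) (u : ℝ → ℝ × ℝ → ℂ) : ℝ≥0∞ :=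
  ⨅ (w : ℝ → ℝ × ℝ → ℂ) (_ : ∀ t ∈ Set.Icc (0:ℝ) T, w t = u t), XnormE b s1 s2 w

/-- Fourier multiplier of the (extended) KPB-II semigroup `W(t)`. -/
def Wmul (t : ℝ) (ν : ℝ × ℝ) : ℂ :=
  Complex.exp (Complex.I * Complex.ofReal (t * Pk ν) - Complex.ofReal (ν.1 ^ 2 * |t|))

/-- Spatial Fourier transform of a product of two functions, expressed as the convolution
of their spatial Fourier transforms. -/
def prodFT (f g : ℝ × ℝ → ℂ) (ν : ℝ × ℝ) : ℂ :=
  Complex.ofReal (((2 * Real.pi) ^ 2)⁻¹) * ∫ ν₁ : ℝ × ℝ, f ν₁ * g (ν - ν₁)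

/-- `∂ₓ(u v)` on the spatial Fourier side. -/
def dxProd (u v : ℝ → ℝ × ℝ → ℂ) (t : ℝ) (ν : ℝ × ℝ) : ℂ :=
  Complex.I * Complex.ofReal ν.1 * prodFT (u t) (v t) ν

/-- `u` solves the Duhamel formulation of the KPB-II equation with data `φ` on `[0,T]`,
with everything written on the spatial Fourier side. -/
def SolvesDuhamel (φ : ℝ × ℝ → ℂ) (u : ℝ → ℝ × ℝ → ℂ) (T : ℝ) : Prop :=
  ∀ t ∈ Set.Icc (0:ℝ) T, ∀ ν : ℝ × ℝ,
    u t ν = Wmul t ν * φ ν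
      - (1/2 : ℂ) * ∫ t' in (0:ℝ)..t, Wmul (t - t') ν * dxProd u u t' ν

/-- `u ∈ C(S; H^{s1,s2})`. -/
def ContH (s1 s2 : ℝ) (S : Set ℝ) (u : ℝ → ℝ × ℝ → ℂ) : Prop :=
  (∀ t ∈ S, HnormE s1 s2 (u t) < ⊤) ∧
  ∀ t₀ ∈ S, ∀ ε : ℝ, 0 < ε → ∃ δ : ℝ, 0 < δ ∧ ∀ t ∈ S, |t - t₀| < δ →
    HnormE s1 s2 (fun ν => u t ν - u t₀ ν) < ENNReal.ofReal ε

/-- Standard time cutoff: smooth, supported in `[-2,2]`, equal to `1` on `[-1,1]`. -/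
def IsCutoff (ψ : ℝ → ℝ) : Prop :=
  ContDiff ℝ (⊤ : ℕ∞) ψ ∧ Function.support ψ ⊆ Set.Icc (-2 : ℝ) 2 ∧
    ∀ t ∈ Set.Icc (-1 : ℝ) 1, ψ t = 1

/-- The `Y^b_ξ` norm `‖⟨iτ+ξ²⟩^b û(τ)‖_{L²_τ}`. -/
def YnormE (b ξ : ℝ) (u : ℝ → ℂ) : ℝ≥0∞ :=
  (∫⁻ τ : ℝ, ENNReal.ofReal ((1 + τ ^ 2 + ξ ^ 4) ^ b) * (‖fourier1 u τ‖₊ : ℝ≥0∞) ^ 2) ^ ((1:ℝ)/2)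

/-- One-dimensional homogeneous Sobolev norm `Ḣ^b`. -/
def HdotE (b : ℝ) (f : ℝ → ℂ) : ℝ≥0∞ :=
  (∫⁻ τ : ℝ, ENNReal.ofReal (|τ| ^ (2 * b)) * (‖fourier1 f τ‖₊ : ℝ≥0∞) ^ 2) ^ ((1:ℝ)/2)

/-- Weighted measure realizing `H^{s1,s2}` as an `L²` space on the Fourier side. -/
def Hmeas (s1 s2 : ℝ) : Measure (ℝ × ℝ) :=
  volume.withDensity fun ν => ENNReal.ofReal (jb ν.1 ^ (2 * s1) * jb ν.2 ^ (2 * s2))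

/-- Weighted measure realizing `X^{b,s1,s2}` as an `L²` space on the Fourier side. -/
def Xmeas (b s1 s2 : ℝ) : Measure (ℝ × ℝ × ℝ) :=
  volume.withDensity fun p => ENNReal.ofReal (XwE b s1 s2 p.1 p.2)

/-- Mixed space-time Lebesgue norm `L^q_t L^r_{x,y}`. -/
def mixedNormE (q r : ℝ) (g : ℝ → ℝ × ℝ → ℂ) : ℝ≥0∞ :=
  (∫⁻ t : ℝ, (∫⁻ ν : ℝ × ℝ, (‖g t ν‖₊ : ℝ≥0∞) ^ r) ^ (q / r)) ^ (1 / q)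

/-- Resonance function `χ(ξ,ξ₁,η,η₁)`. -/
def chiRes (ξ ξ₁ η η₁ : ℝ) : ℝ :=
  3 * ξ * ξ₁ * (ξ - ξ₁) + (η * ξ₁ - η₁ * ξ) ^ 2 / (ξ * ξ₁ * (ξ - ξ₁))

/-- Membership in the rectangle `D_{1,N} = [N/2,N] × [-6N²,6N²]`. -/
def inD1 (N ξ η : ℝ) : Prop :=
  ξ ∈ Set.Icc (N / 2) N ∧ η ∈ Set.Icc (-(6 * N ^ 2)) (6 * N ^ 2)

/-- Membership in the rectangle `D_{2,N} = [N,2N] × [√3 N²,(√3+1)N²]`. -/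
def inD2 (N ξ η : ℝ) : Prop :=
  ξ ∈ Set.Icc N (2 * N) ∧ η ∈ Set.Icc (Real.sqrt 3 * N ^ 2) ((Real.sqrt 3 + 1) * N ^ 2)

end


section HeatAux
open MeasureTheory intervalIntegral Set Filter


-- derivative of t ↦ e^{itτ}
lemma hasDerivAt_eit (τ t : ℝ) :
    HasDerivAt (fun s : ℝ => Complex.exp (Complex.I * Complex.ofReal (s * τ)))
      (Complex.I * τ * Complex.exp (Complex.I * Complex.ofReal (t * τ))) t := by
  have h1 : HasDerivAt (fun s : ℝ => Complex.I * Complex.ofReal (s * τ)) (Complex.I * τ) t := by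
    have h0 : HasDerivAt (fun s : ℝ => s * τ) τ t := by
      simpa using (hasDerivAt_id t).mul_const τ
    simpa [mul_comm] using (h0.ofReal_comp.const_mul Complex.I)
  simpa [mul_comm] using h1.cexp

-- integration by parts against e^{itτ}
lemma ibp_eit (τ a b : ℝ) (v v' : ℝ → ℂ) (hv : ∀ t, HasDerivAt v (v' t) t)
    (hv' : Continuous v') :
    ∫ t in a..b, Complex.exp (Complex.I * Complex.ofReal (t * τ)) * v' t
      = Complex.exp (Complex.I * Complex.ofReal (b * τ)) * v b
        - Complex.exp (Complex.I * Complex.ofReal (a * τ)) * v a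
        - Complex.I * τ * ∫ t in a..b, Complex.exp (Complex.I * Complex.ofReal (t * τ)) * v t := by
  have hcont : Continuous fun t : ℝ => Complex.exp (Complex.I * Complex.ofReal (t * τ)) := by
    fun_prop
  have hvc : Continuous v := by
    have : Differentiable ℝ v := fun t => (hv t).differentiableAt
    exact this.continuous
  have h := intervalIntegral.integral_mul_deriv_eq_deriv_mul
    (u := fun t : ℝ => Complex.exp (Complex.I * Complex.ofReal (t * τ)))
    (u' := fun t : ℝ => Complex.I * τ * Complex.exp (Complex.I * Complex.ofReal (t * τ)))
    (v := v) (v' := v') (a := a) (b := b)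
    (fun t _ => hasDerivAt_eit τ t) (fun t _ => hv t)
    ((continuous_const.mul hcont).intervalIntegrable a b) (hv'.intervalIntegrable a b)
  rw [h]
  rw [show (∫ t in a..b, Complex.I * ↑τ * Complex.exp (Complex.I * Complex.ofReal (t * τ)) * v t)
      = ∫ t in a..b, Complex.I * ↑τ * (Complex.exp (Complex.I * Complex.ofReal (t * τ)) * v t) by
    simp [mul_assoc]]
  rw [intervalIntegral.integral_const_mul]


lemma exp_int_le_three {c : ℝ} (hc : 0 ≤ c) :
    ∫ t in (0:ℝ)..3, Real.exp (-(t * c)) ≤ 3 := by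
  have h : ∫ t in (0:ℝ)..3, (1:ℝ) = 3 := by simp
  calc ∫ t in (0:ℝ)..3, Real.exp (-(t * c))
      ≤ ∫ t in (0:ℝ)..3, (1:ℝ) := by
        apply intervalIntegral.integral_mono_on (by norm_num)
          ((Real.continuous_exp.comp (by fun_prop)).intervalIntegrable 0 3)
          (intervalIntegrable_const)
        intro t ht
        show Real.exp (-(t * c)) ≤ 1
        exact Real.exp_le_one_iff.2 (by nlinarith [ht.1])
    _ = 3 := h

lemma exp_int_le_inv {c : ℝ} (hc : 0 < c) :
    ∫ t in (0:ℝ)..3, Real.exp (-(t * c)) ≤ 1 / c := by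
  have h := intervalIntegral.integral_eq_sub_of_hasDerivAt
      (f := fun t : ℝ => -(Real.exp (-(t * c))) / c)
      (f' := fun t : ℝ => Real.exp (-(t * c))) (a := (0:ℝ)) (b := (3:ℝ))
      (fun t ht => by
        have h1 : HasDerivAt (fun t : ℝ => -(t * c)) (-c) t := by
          simpa using ((hasDerivAt_id t).mul_const c).fun_neg
        have h2 := (h1.exp.neg).div_const c
        refine h2.congr_deriv ?_
        field_simp)
      ((Real.continuous_exp.comp (by fun_prop)).intervalIntegrable 0 3)
  rw [h]
  have e1 : (0:ℝ) < Real.exp (-(3 * c)) := Real.exp_pos _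
  have e2 : Real.exp (-(0 * c)) = 1 := by simp
  simp only [e2]
  rw [div_sub_div_same, div_le_div_iff₀ (by positivity) hc]
  nlinarith

lemma exp_int_nonneg (c : ℝ) : 0 ≤ ∫ t in (0:ℝ)..3, Real.exp (-(t * c)) := by
  apply intervalIntegral.integral_nonneg (by norm_num)
  intro t _; positivity


lemma hasDerivAt_mul_exp (f f' : ℝ → ℝ) (hf : ∀ t, HasDerivAt f (f' t) t) (μ t : ℝ) :
    HasDerivAt (fun s => f s * Real.exp (μ * s))
      (f' t * Real.exp (μ * t) + μ * (f t * Real.exp (μ * t))) t := by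
  have he : HasDerivAt (fun s : ℝ => Real.exp (μ * s)) (μ * Real.exp (μ * t)) t := by
    have : HasDerivAt (fun s : ℝ => μ * s) μ t := by simpa using (hasDerivAt_id t).const_mul μ
    simpa [mul_comm] using this.exp
  have := (hf t).mul he
  refine this.congr_deriv ?_
  ring

-- cutoff vanishing facts
section cutoff
variable {ψ : ℝ → ℝ} (hsm : ContDiff ℝ (⊤ : ℕ∞) ψ)
  (hsupp : Function.support ψ ⊆ Set.Icc (-2 : ℝ) 2)
  (hone : ∀ t ∈ Set.Icc (-1 : ℝ) 1, ψ t = 1)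

include hsupp in
lemma psi_three : ψ 3 = 0 := by
  by_contra h
  have := hsupp h
  simp [Set.mem_Icc] at this; linarith

include hsupp in
lemma psi_neg_three : ψ (-3) = 0 := by
  by_contra h
  have := hsupp h
  simp [Set.mem_Icc] at this; linarith

include hsupp in
lemma deriv_psi_three : deriv ψ 3 = 0 := by
  have h : ψ =ᶠ[nhds 3] (fun _ => (0:ℝ)) := by
    filter_upwards [Ioi_mem_nhds (show (2:ℝ) < 3 by norm_num)] with t ht
    by_contra h
    have := hsupp h
    simp [Set.mem_Icc] at this
    exact absurd ht (by simp; linarith)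
  simp [h.deriv_eq]

include hsupp in
lemma deriv_psi_neg_three : deriv ψ (-3) = 0 := by
  have h : ψ =ᶠ[nhds (-3)] (fun _ => (0:ℝ)) := by
    filter_upwards [Iio_mem_nhds (show (-3:ℝ) < -2 by norm_num)] with t ht
    by_contra h
    have := hsupp h
    simp [Set.mem_Icc] at this
    exact absurd ht (by simp; linarith)
  simp [h.deriv_eq]

include hone in
lemma psi_zero : ψ 0 = 1 := hone 0 (by norm_num)

include hone in
lemma deriv_psi_zero : deriv ψ 0 = 0 := by
  have h : ψ =ᶠ[nhds 0] (fun _ => (1:ℝ)) := by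
    filter_upwards [Ioo_mem_nhds (show (-1:ℝ) < 0 by norm_num) (show (0:ℝ) < 1 by norm_num)]
      with t ht
    exact hone t ⟨le_of_lt ht.1, le_of_lt ht.2⟩
  simp [h.deriv_eq]

end cutoff


section main
variable {ψ : ℝ → ℝ} (hsm : ContDiff ℝ (⊤ : ℕ∞) ψ)
  (hsupp : Function.support ψ ⊆ Set.Icc (-2 : ℝ) 2)
  (hone : ∀ t ∈ Set.Icc (-1 : ℝ) 1, ψ t = 1)
  {c : ℝ} (hc : 0 ≤ c) (τ : ℝ)

include hsm hsupp in
lemma F_split :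
    (∫ t : ℝ, Complex.exp (Complex.I * Complex.ofReal (t * τ)) * Complex.ofReal (ψ t * Real.exp (-(|t| * c))))
      = (∫ t in (-3:ℝ)..0, Complex.exp (Complex.I * Complex.ofReal (t * τ)) * Complex.ofReal (ψ t * Real.exp (c * t)))
        + ∫ t in (0:ℝ)..3, Complex.exp (Complex.I * Complex.ofReal (t * τ)) * Complex.ofReal (ψ t * Real.exp (-c * t)) := by
  have hψc : Continuous ψ := hsm.continuous
  have hGc : Continuous fun t : ℝ =>
      Complex.exp (Complex.I * Complex.ofReal (t * τ)) * Complex.ofReal (ψ t * Real.exp (-(|t| * c))) := by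
    fun_prop
  have hsub : Function.support (fun t : ℝ =>
      Complex.exp (Complex.I * Complex.ofReal (t * τ)) * Complex.ofReal (ψ t * Real.exp (-(|t| * c))))
      ⊆ Set.Ioc (-3 : ℝ) 3 := by
    intro t ht
    have hψt : ψ t ≠ 0 := by
      intro h0
      apply ht
      simp [h0]
    have := hsupp hψt
    simp only [Set.mem_Icc] at this
    exact ⟨by linarith [this.1], by linarith [this.2]⟩
  rw [← intervalIntegral.integral_eq_integral_of_support_subset hsub]
  rw [← intervalIntegral.integral_add_adjacent_intervals (a := (-3:ℝ)) (b := 0) (c := 3)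
    (hGc.intervalIntegrable _ _) (hGc.intervalIntegrable _ _)]
  congr 1
  · apply intervalIntegral.integral_congr
    intro t ht
    rw [Set.uIcc_of_le (by norm_num : (-3:ℝ) ≤ 0)] at ht
    have h1 : |t| = -t := abs_of_nonpos ht.2
    simp only [h1]
    ring_nf
  · apply intervalIntegral.integral_congr
    intro t ht
    rw [Set.uIcc_of_le (by norm_num : (0:ℝ) ≤ 3)] at ht
    have h1 : |t| = t := abs_of_nonneg ht.1
    simp only [h1]
    ring_nf
end main

lemma norm_eit_mul (x : ℝ) (z : ℂ) :
    ‖Complex.exp (Complex.I * Complex.ofReal x) * z‖ = ‖z‖ := by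
  rw [norm_mul]
  have : ‖Complex.exp (Complex.I * Complex.ofReal x)‖ = 1 := by
    rw [Complex.norm_exp]
    simp
  rw [this, one_mul]

lemma exp_int_comp_neg (c : ℝ) :
    (∫ t in (-3:ℝ)..0, Real.exp (c * t)) = ∫ t in (0:ℝ)..3, Real.exp (-(t * c)) := by
  have h := intervalIntegral.integral_comp_neg (a := (0:ℝ)) (b := 3) (fun x => Real.exp (c * x))
  simp only [neg_zero] at h
  rw [← h]
  apply intervalIntegral.integral_congr
  intro t _
  simp only
  congr 1
  ring

section mainA
variable {ψ : ℝ → ℝ} (hsm : ContDiff ℝ (⊤ : ℕ∞) ψ)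
  (hsupp : Function.support ψ ⊆ Set.Icc (-2 : ℝ) 2)

include hsm hsupp in
lemma normF_le {M₀ c : ℝ} (hM : ∀ t, |ψ t| ≤ M₀) (hc : 0 ≤ c) (τ : ℝ) :
    ‖∫ t : ℝ, Complex.exp (Complex.I * Complex.ofReal (t * τ)) *
        Complex.ofReal (ψ t * Real.exp (-(|t| * c)))‖ ≤ 12 * M₀ / (1 + c) := by
  have hψc : Continuous ψ := hsm.continuous
  have hM0 : 0 ≤ M₀ := le_trans (abs_nonneg _) (hM 0)
  set Eint := ∫ t in (0:ℝ)..3, Real.exp (-(t * c)) with hEint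
  have hE0 : 0 ≤ Eint := exp_int_nonneg c
  rw [F_split hsm hsupp]
  have hb1 : ‖∫ t in (-3:ℝ)..0, Complex.exp (Complex.I * Complex.ofReal (t * τ)) *
      Complex.ofReal (ψ t * Real.exp (c * t))‖ ≤ M₀ * Eint := by
    calc ‖∫ t in (-3:ℝ)..0, Complex.exp (Complex.I * Complex.ofReal (t * τ)) *
        Complex.ofReal (ψ t * Real.exp (c * t))‖
        ≤ ∫ t in (-3:ℝ)..0, ‖Complex.exp (Complex.I * Complex.ofReal (t * τ)) *
            Complex.ofReal (ψ t * Real.exp (c * t))‖ :=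
          intervalIntegral.norm_integral_le_integral_norm (by norm_num)
      _ ≤ ∫ t in (-3:ℝ)..0, M₀ * Real.exp (c * t) := by
          apply intervalIntegral.integral_mono_on (by norm_num)
            ((by fun_prop : Continuous fun t : ℝ => ‖Complex.exp (Complex.I * Complex.ofReal (t * τ)) *
              Complex.ofReal (ψ t * Real.exp (c * t))‖).intervalIntegrable _ _)
            ((by fun_prop : Continuous fun t : ℝ => M₀ * Real.exp (c * t)).intervalIntegrable _ _)
          intro t _
          rw [norm_eit_mul, Complex.norm_real, Real.norm_eq_abs, abs_mul,
            abs_of_nonneg (Real.exp_nonneg _)]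
          exact mul_le_mul_of_nonneg_right (hM t) (Real.exp_nonneg _)
      _ = M₀ * Eint := by rw [intervalIntegral.integral_const_mul, exp_int_comp_neg]
  have hb2 : ‖∫ t in (0:ℝ)..3, Complex.exp (Complex.I * Complex.ofReal (t * τ)) *
      Complex.ofReal (ψ t * Real.exp (-c * t))‖ ≤ M₀ * Eint := by
    calc ‖∫ t in (0:ℝ)..3, Complex.exp (Complex.I * Complex.ofReal (t * τ)) *
        Complex.ofReal (ψ t * Real.exp (-c * t))‖
        ≤ ∫ t in (0:ℝ)..3, ‖Complex.exp (Complex.I * Complex.ofReal (t * τ)) *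
            Complex.ofReal (ψ t * Real.exp (-c * t))‖ :=
          intervalIntegral.norm_integral_le_integral_norm (by norm_num)
      _ ≤ ∫ t in (0:ℝ)..3, M₀ * Real.exp (-(t * c)) := by
          apply intervalIntegral.integral_mono_on (by norm_num)
            ((by fun_prop : Continuous fun t : ℝ => ‖Complex.exp (Complex.I * Complex.ofReal (t * τ)) *
              Complex.ofReal (ψ t * Real.exp (-c * t))‖).intervalIntegrable _ _)
            ((by fun_prop : Continuous fun t : ℝ => M₀ * Real.exp (-(t * c))).intervalIntegrable _ _)
          intro t _
          rw [norm_eit_mul, Complex.norm_real, Real.norm_eq_abs, abs_mul,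
            abs_of_nonneg (Real.exp_nonneg _)]
          have : Real.exp (-c * t) = Real.exp (-(t * c)) := by congr 1; ring
          rw [this]
          exact mul_le_mul_of_nonneg_right (hM t) (Real.exp_nonneg _)
      _ = M₀ * Eint := by rw [intervalIntegral.integral_const_mul]
  have htot : ‖(∫ t in (-3:ℝ)..0, Complex.exp (Complex.I * Complex.ofReal (t * τ)) *
        Complex.ofReal (ψ t * Real.exp (c * t)))
      + ∫ t in (0:ℝ)..3, Complex.exp (Complex.I * Complex.ofReal (t * τ)) *
        Complex.ofReal (ψ t * Real.exp (-c * t))‖ ≤ 2 * (M₀ * Eint) := by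
    calc _ ≤ _ := norm_add_le _ _
      _ ≤ 2 * (M₀ * Eint) := by linarith
  refine le_trans htot ?_
  have hk2 : (0:ℝ) ≤ M₀ * Eint := mul_nonneg hM0 hE0
  rcases le_or_gt c 1 with h1 | h1
  · have h3 : Eint ≤ 3 := exp_int_le_three hc
    rw [le_div_iff₀ (by linarith : (0:ℝ) < 1 + c)]
    have k1 : M₀ * Eint ≤ 3 * M₀ := by nlinarith
    nlinarith [mul_le_mul_of_nonneg_right k1 (show (0:ℝ) ≤ 1 + c by linarith)]
  · have h3 : Eint ≤ 1 / c := exp_int_le_inv (by linarith)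
    rw [le_div_iff₀ (by linarith : (0:ℝ) < 1 + c)]
    have hec : Eint * c ≤ 1 := (le_div_iff₀ (by linarith)).mp h3
    have k1 : M₀ * (Eint * c) ≤ M₀ := by nlinarith
    nlinarith [mul_le_mul_of_nonneg_left h1.le hk2]

end mainA

section mainB
variable {ψ : ℝ → ℝ} (hsm : ContDiff ℝ (⊤ : ℕ∞) ψ)
  (hsupp : Function.support ψ ⊆ Set.Icc (-2 : ℝ) 2)
  (hone : ∀ t ∈ Set.Icc (-1 : ℝ) 1, ψ t = 1)

include hsm hsupp hone in
lemma tau_sq_normF_le {M₀ M₁ M₂ c : ℝ}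
    (hM0 : ∀ t, |ψ t| ≤ M₀) (hM1 : ∀ t, |deriv ψ t| ≤ M₁)
    (hM2 : ∀ t, |deriv (deriv ψ) t| ≤ M₂) (hc : 0 ≤ c) (τ : ℝ) :
    τ^2 * ‖∫ t : ℝ, Complex.exp (Complex.I * Complex.ofReal (t * τ)) *
        Complex.ofReal (ψ t * Real.exp (-(|t| * c)))‖
      ≤ (2 + 6*M₂ + 12*M₁ + 2*M₀) * (1 + c) := by
  have hψc : Continuous ψ := hsm.continuous
  have hsm1 : ContDiff ℝ (⊤ : ℕ∞) (deriv ψ) := (contDiff_infty_iff_deriv.mp hsm).2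
  have hψd : ∀ t, HasDerivAt ψ (deriv ψ t) t := fun t => ((hsm.differentiable (by simp)) t).hasDerivAt
  have hφ1d : ∀ t, HasDerivAt (deriv ψ) (deriv (deriv ψ) t) t :=
    fun t => ((hsm1.differentiable (by simp)) t).hasDerivAt
  have hφ1c : Continuous (deriv ψ) := hsm1.continuous
  have hφ2c : Continuous (deriv (deriv ψ)) := (contDiff_infty_iff_deriv.mp hsm1).2.continuous
  have hM0' : 0 ≤ M₀ := le_trans (abs_nonneg _) (hM0 0)
  have hM1' : 0 ≤ M₁ := le_trans (abs_nonneg _) (hM1 0)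
  have hM2' : 0 ≤ M₂ := le_trans (abs_nonneg _) (hM2 0)
  set Eint := ∫ t in (0:ℝ)..3, Real.exp (-(t * c)) with hEintdef
  have hE0 : 0 ≤ Eint := exp_int_nonneg c
  -- first level IBP, right interval (μ = -c)
  have E1R := ibp_eit τ 0 3 (fun s => ((ψ s * Real.exp (-c * s) : ℝ) : ℂ))
    (fun s => ((deriv ψ s * Real.exp (-c * s) + -c * (ψ s * Real.exp (-c * s)) : ℝ) : ℂ))
    (fun t => (hasDerivAt_mul_exp ψ (deriv ψ) hψd (-c) t).ofReal_comp)
    (by fun_prop)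
  have E2R := ibp_eit τ 0 3
    (fun s => ((deriv ψ s * Real.exp (-c * s) + -c * (ψ s * Real.exp (-c * s)) : ℝ) : ℂ))
    (fun s => ((deriv (deriv ψ) s * Real.exp (-c * s) + -c * (deriv ψ s * Real.exp (-c * s))
      + -c * (deriv ψ s * Real.exp (-c * s) + -c * (ψ s * Real.exp (-c * s))) : ℝ) : ℂ))
    (fun t => (((hasDerivAt_mul_exp (deriv ψ) (deriv (deriv ψ)) hφ1d (-c) t).add
      ((hasDerivAt_mul_exp ψ (deriv ψ) hψd (-c) t).const_mul (-c)))).ofReal_comp)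
    (by fun_prop)
  have E1L := ibp_eit τ (-3) 0 (fun s => ((ψ s * Real.exp (c * s) : ℝ) : ℂ))
    (fun s => ((deriv ψ s * Real.exp (c * s) + c * (ψ s * Real.exp (c * s)) : ℝ) : ℂ))
    (fun t => (hasDerivAt_mul_exp ψ (deriv ψ) hψd c t).ofReal_comp)
    (by fun_prop)
  have E2L := ibp_eit τ (-3) 0
    (fun s => ((deriv ψ s * Real.exp (c * s) + c * (ψ s * Real.exp (c * s)) : ℝ) : ℂ))
    (fun s => ((deriv (deriv ψ) s * Real.exp (c * s) + c * (deriv ψ s * Real.exp (c * s))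
      + c * (deriv ψ s * Real.exp (c * s) + c * (ψ s * Real.exp (c * s))) : ℝ) : ℂ))
    (fun t => (((hasDerivAt_mul_exp (deriv ψ) (deriv (deriv ψ)) hφ1d c t).add
      ((hasDerivAt_mul_exp ψ (deriv ψ) hψd c t).const_mul c))).ofReal_comp)
    (by fun_prop)
  beta_reduce at E1R E2R E1L E2L
  have key : ((τ:ℂ)^2) * ((∫ t in (-3:ℝ)..0, Complex.exp (Complex.I * Complex.ofReal (t * τ)) *
        Complex.ofReal (ψ t * Real.exp (c * t)))
      + ∫ t in (0:ℝ)..3, Complex.exp (Complex.I * Complex.ofReal (t * τ)) *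
        Complex.ofReal (ψ t * Real.exp (-c * t)))
      = 2 * (c:ℂ)
        - (∫ t in (-3:ℝ)..0, Complex.exp (Complex.I * Complex.ofReal (t * τ)) *
            Complex.ofReal (deriv (deriv ψ) t * Real.exp (c * t) + c * (deriv ψ t * Real.exp (c * t))
              + c * (deriv ψ t * Real.exp (c * t) + c * (ψ t * Real.exp (c * t)))))
        - ∫ t in (0:ℝ)..3, Complex.exp (Complex.I * Complex.ofReal (t * τ)) *
            Complex.ofReal (deriv (deriv ψ) t * Real.exp (-c * t) + -c * (deriv ψ t * Real.exp (-c * t))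
              + -c * (deriv ψ t * Real.exp (-c * t) + -c * (ψ t * Real.exp (-c * t)))) := by
    rw [E2L, E2R, E1L, E1R]
    simp only [psi_three hsupp, psi_neg_three hsupp, psi_zero hone, deriv_psi_zero hone,
      deriv_psi_three hsupp, deriv_psi_neg_three hsupp, zero_mul, mul_zero, zero_add, add_zero,
      neg_zero, mul_one, Real.exp_zero, Complex.ofReal_zero, Complex.ofReal_one,
      Complex.exp_zero, one_mul, sub_zero, zero_sub, Complex.ofReal_neg]
    linear_combination ((τ:ℂ)^2 * ((∫ t in (-3:ℝ)..0, Complex.exp (Complex.I * Complex.ofReal (t * τ)) *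
        Complex.ofReal (ψ t * Real.exp (c * t)))
      + ∫ t in (0:ℝ)..3, Complex.exp (Complex.I * Complex.ofReal (t * τ)) *
        Complex.ofReal (ψ t * Real.exp (-c * t)))) * Complex.I_sq
  rw [F_split hsm hsupp (c := c) (τ := τ)]
  have hnorm : τ^2 * ‖(∫ t in (-3:ℝ)..0, Complex.exp (Complex.I * Complex.ofReal (t * τ)) *
        Complex.ofReal (ψ t * Real.exp (c * t)))
      + ∫ t in (0:ℝ)..3, Complex.exp (Complex.I * Complex.ofReal (t * τ)) *
        Complex.ofReal (ψ t * Real.exp (-c * t))‖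
      = ‖((τ:ℂ)^2) * ((∫ t in (-3:ℝ)..0, Complex.exp (Complex.I * Complex.ofReal (t * τ)) *
        Complex.ofReal (ψ t * Real.exp (c * t)))
      + ∫ t in (0:ℝ)..3, Complex.exp (Complex.I * Complex.ofReal (t * τ)) *
        Complex.ofReal (ψ t * Real.exp (-c * t)))‖ := by
    rw [norm_mul, norm_pow, Complex.norm_real, Real.norm_eq_abs, sq_abs]
  rw [hnorm, key]
  -- bound the two second-derivative integrals
  have hSR : ‖∫ t in (0:ℝ)..3, Complex.exp (Complex.I * Complex.ofReal (t * τ)) *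
      Complex.ofReal (deriv (deriv ψ) t * Real.exp (-c * t) + -c * (deriv ψ t * Real.exp (-c * t))
        + -c * (deriv ψ t * Real.exp (-c * t) + -c * (ψ t * Real.exp (-c * t))))‖
      ≤ 3*(M₂ + 2*c*M₁) + c*M₀ := by
    have hptw : ∀ t ∈ Set.Icc (0:ℝ) 3,
        ‖Complex.exp (Complex.I * Complex.ofReal (t * τ)) *
          Complex.ofReal (deriv (deriv ψ) t * Real.exp (-c * t) + -c * (deriv ψ t * Real.exp (-c * t))
            + -c * (deriv ψ t * Real.exp (-c * t) + -c * (ψ t * Real.exp (-c * t))))‖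
          ≤ M₂ + 2*c*M₁ + c^2*M₀*Real.exp (-c * t) := by
      intro t ht
      have hEt0 : (0:ℝ) ≤ Real.exp (-c * t) := (Real.exp_pos _).le
      have hEt1 : Real.exp (-c * t) ≤ 1 := Real.exp_le_one_iff.2 (by nlinarith [ht.1])
      rw [norm_eit_mul, Complex.norm_real, Real.norm_eq_abs]
      have h1 : |deriv (deriv ψ) t * Real.exp (-c * t)| ≤ M₂ := by
        rw [abs_mul, abs_of_nonneg hEt0]
        nlinarith [hM2 t, abs_nonneg (deriv (deriv ψ) t)]
      have h2 : |(-c) * (deriv ψ t * Real.exp (-c * t))| ≤ c*M₁ := by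
        rw [abs_mul, abs_neg, abs_of_nonneg hc, abs_mul, abs_of_nonneg hEt0]
        exact mul_le_mul_of_nonneg_left (by nlinarith [hM1 t, abs_nonneg (deriv ψ t)]) hc
      have h3 : |(-c) * (deriv ψ t * Real.exp (-c * t) + -c * (ψ t * Real.exp (-c * t)))|
          ≤ c*M₁ + c^2*M₀*Real.exp (-c * t) := by
        rw [abs_mul, abs_neg, abs_of_nonneg hc]
        have hi : |deriv ψ t * Real.exp (-c * t) + -c * (ψ t * Real.exp (-c * t))|
            ≤ M₁*Real.exp (-c * t) + c*(M₀*Real.exp (-c * t)) := by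
          refine (abs_add_le _ _).trans (add_le_add ?_ ?_)
          · rw [abs_mul, abs_of_nonneg hEt0]
            exact mul_le_mul_of_nonneg_right (hM1 t) hEt0
          · rw [abs_mul, abs_neg, abs_of_nonneg hc, abs_mul, abs_of_nonneg hEt0]
            exact mul_le_mul_of_nonneg_left
              (mul_le_mul_of_nonneg_right (hM0 t) hEt0) hc
        have := mul_le_mul_of_nonneg_left hi hc
        nlinarith [mul_nonneg hc (mul_nonneg hM1' (sub_nonneg.2 hEt1))]
      calc |deriv (deriv ψ) t * Real.exp (-c * t) + -c * (deriv ψ t * Real.exp (-c * t))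
            + -c * (deriv ψ t * Real.exp (-c * t) + -c * (ψ t * Real.exp (-c * t)))|
          ≤ |deriv (deriv ψ) t * Real.exp (-c * t)| + |(-c) * (deriv ψ t * Real.exp (-c * t))|
            + |(-c) * (deriv ψ t * Real.exp (-c * t) + -c * (ψ t * Real.exp (-c * t)))| :=
            abs_add_three _ _ _
        _ ≤ M₂ + 2*c*M₁ + c^2*M₀*Real.exp (-c * t) := by linarith
    calc ‖∫ t in (0:ℝ)..3, Complex.exp (Complex.I * Complex.ofReal (t * τ)) *
        Complex.ofReal (deriv (deriv ψ) t * Real.exp (-c * t) + -c * (deriv ψ t * Real.exp (-c * t))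
          + -c * (deriv ψ t * Real.exp (-c * t) + -c * (ψ t * Real.exp (-c * t))))‖
        ≤ ∫ t in (0:ℝ)..3, ‖Complex.exp (Complex.I * Complex.ofReal (t * τ)) *
          Complex.ofReal (deriv (deriv ψ) t * Real.exp (-c * t) + -c * (deriv ψ t * Real.exp (-c * t))
            + -c * (deriv ψ t * Real.exp (-c * t) + -c * (ψ t * Real.exp (-c * t))))‖ :=
          intervalIntegral.norm_integral_le_integral_norm (by norm_num)
      _ ≤ ∫ t in (0:ℝ)..3, (M₂ + 2*c*M₁ + c^2*M₀*Real.exp (-c * t)) := by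
          apply intervalIntegral.integral_mono_on (by norm_num)
            ((by fun_prop : Continuous fun t : ℝ => ‖Complex.exp (Complex.I * Complex.ofReal (t * τ)) *
              Complex.ofReal (deriv (deriv ψ) t * Real.exp (-c * t) + -c * (deriv ψ t * Real.exp (-c * t))
                + -c * (deriv ψ t * Real.exp (-c * t) + -c * (ψ t * Real.exp (-c * t))))‖).intervalIntegrable _ _)
            ((by fun_prop : Continuous fun t : ℝ =>
              M₂ + 2*c*M₁ + c^2*M₀*Real.exp (-c * t)).intervalIntegrable _ _)
          exact hptw
      _ = 3*(M₂ + 2*c*M₁) + c^2*M₀*Eint := by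
          rw [intervalIntegral.integral_add intervalIntegrable_const
            (((by fun_prop : Continuous fun t : ℝ => c^2*M₀*Real.exp (-c * t))).intervalIntegrable _ _),
            intervalIntegral.integral_const, intervalIntegral.integral_const_mul]
          have hEE : (∫ t in (0:ℝ)..3, Real.exp (-c * t)) = Eint := by
            rw [hEintdef]
            apply intervalIntegral.integral_congr
            intro t _
            simp only
            congr 1
            ring
          rw [hEE]
          simp [smul_eq_mul]
          try ring
      _ ≤ 3*(M₂ + 2*c*M₁) + c*M₀ := by
          rcases hc.eq_or_lt with h | h
          · simp [← h]
          · have h3 : Eint ≤ 1 / c := exp_int_le_inv h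
            have hec : Eint * c ≤ 1 := (le_div_iff₀ h).mp h3
            nlinarith [mul_le_mul_of_nonneg_left hec (mul_nonneg hc hM0')]
  have hSL : ‖∫ t in (-3:ℝ)..0, Complex.exp (Complex.I * Complex.ofReal (t * τ)) *
      Complex.ofReal (deriv (deriv ψ) t * Real.exp (c * t) + c * (deriv ψ t * Real.exp (c * t))
        + c * (deriv ψ t * Real.exp (c * t) + c * (ψ t * Real.exp (c * t))))‖
      ≤ 3*(M₂ + 2*c*M₁) + c*M₀ := by
    have hptw : ∀ t ∈ Set.Icc (-3:ℝ) 0,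
        ‖Complex.exp (Complex.I * Complex.ofReal (t * τ)) *
          Complex.ofReal (deriv (deriv ψ) t * Real.exp (c * t) + c * (deriv ψ t * Real.exp (c * t))
            + c * (deriv ψ t * Real.exp (c * t) + c * (ψ t * Real.exp (c * t))))‖
          ≤ M₂ + 2*c*M₁ + c^2*M₀*Real.exp (c * t) := by
      intro t ht
      have hEt0 : (0:ℝ) ≤ Real.exp (c * t) := (Real.exp_pos _).le
      have hEt1 : Real.exp (c * t) ≤ 1 := Real.exp_le_one_iff.2 (by nlinarith [ht.2])
      rw [norm_eit_mul, Complex.norm_real, Real.norm_eq_abs]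
      have h1 : |deriv (deriv ψ) t * Real.exp (c * t)| ≤ M₂ := by
        rw [abs_mul, abs_of_nonneg hEt0]
        nlinarith [hM2 t, abs_nonneg (deriv (deriv ψ) t)]
      have h2 : |c * (deriv ψ t * Real.exp (c * t))| ≤ c*M₁ := by
        rw [abs_mul, abs_of_nonneg hc, abs_mul, abs_of_nonneg hEt0]
        exact mul_le_mul_of_nonneg_left (by nlinarith [hM1 t, abs_nonneg (deriv ψ t)]) hc
      have h3 : |c * (deriv ψ t * Real.exp (c * t) + c * (ψ t * Real.exp (c * t)))|
          ≤ c*M₁ + c^2*M₀*Real.exp (c * t) := by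
        rw [abs_mul, abs_of_nonneg hc]
        have hi : |deriv ψ t * Real.exp (c * t) + c * (ψ t * Real.exp (c * t))|
            ≤ M₁*Real.exp (c * t) + c*(M₀*Real.exp (c * t)) := by
          refine (abs_add_le _ _).trans (add_le_add ?_ ?_)
          · rw [abs_mul, abs_of_nonneg hEt0]
            exact mul_le_mul_of_nonneg_right (hM1 t) hEt0
          · rw [abs_mul, abs_of_nonneg hc, abs_mul, abs_of_nonneg hEt0]
            exact mul_le_mul_of_nonneg_left
              (mul_le_mul_of_nonneg_right (hM0 t) hEt0) hc
        have := mul_le_mul_of_nonneg_left hi hc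
        nlinarith [mul_nonneg hc (mul_nonneg hM1' (sub_nonneg.2 hEt1))]
      calc |deriv (deriv ψ) t * Real.exp (c * t) + c * (deriv ψ t * Real.exp (c * t))
            + c * (deriv ψ t * Real.exp (c * t) + c * (ψ t * Real.exp (c * t)))|
          ≤ |deriv (deriv ψ) t * Real.exp (c * t)| + |c * (deriv ψ t * Real.exp (c * t))|
            + |c * (deriv ψ t * Real.exp (c * t) + c * (ψ t * Real.exp (c * t)))| :=
            abs_add_three _ _ _
        _ ≤ M₂ + 2*c*M₁ + c^2*M₀*Real.exp (c * t) := by linarith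
    calc ‖∫ t in (-3:ℝ)..0, Complex.exp (Complex.I * Complex.ofReal (t * τ)) *
        Complex.ofReal (deriv (deriv ψ) t * Real.exp (c * t) + c * (deriv ψ t * Real.exp (c * t))
          + c * (deriv ψ t * Real.exp (c * t) + c * (ψ t * Real.exp (c * t))))‖
        ≤ ∫ t in (-3:ℝ)..0, ‖Complex.exp (Complex.I * Complex.ofReal (t * τ)) *
          Complex.ofReal (deriv (deriv ψ) t * Real.exp (c * t) + c * (deriv ψ t * Real.exp (c * t))
            + c * (deriv ψ t * Real.exp (c * t) + c * (ψ t * Real.exp (c * t))))‖ :=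
          intervalIntegral.norm_integral_le_integral_norm (by norm_num)
      _ ≤ ∫ t in (-3:ℝ)..0, (M₂ + 2*c*M₁ + c^2*M₀*Real.exp (c * t)) := by
          apply intervalIntegral.integral_mono_on (by norm_num)
            ((by fun_prop : Continuous fun t : ℝ => ‖Complex.exp (Complex.I * Complex.ofReal (t * τ)) *
              Complex.ofReal (deriv (deriv ψ) t * Real.exp (c * t) + c * (deriv ψ t * Real.exp (c * t))
                + c * (deriv ψ t * Real.exp (c * t) + c * (ψ t * Real.exp (c * t))))‖).intervalIntegrable _ _)
            ((by fun_prop : Continuous fun t : ℝ =>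
              M₂ + 2*c*M₁ + c^2*M₀*Real.exp (c * t)).intervalIntegrable _ _)
          exact hptw
      _ = 3*(M₂ + 2*c*M₁) + c^2*M₀*Eint := by
          rw [intervalIntegral.integral_add intervalIntegrable_const
            (((by fun_prop : Continuous fun t : ℝ => c^2*M₀*Real.exp (c * t))).intervalIntegrable _ _),
            intervalIntegral.integral_const, intervalIntegral.integral_const_mul]
          rw [exp_int_comp_neg c, ← hEintdef]
          simp [smul_eq_mul]
          try ring
      _ ≤ 3*(M₂ + 2*c*M₁) + c*M₀ := by
          rcases hc.eq_or_lt with h | h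
          · simp [← h]
          · have h3 : Eint ≤ 1 / c := exp_int_le_inv h
            have hec : Eint * c ≤ 1 := (le_div_iff₀ h).mp h3
            nlinarith [mul_le_mul_of_nonneg_left hec (mul_nonneg hc hM0')]
  have htri : ‖2 * (c:ℂ)
        - (∫ t in (-3:ℝ)..0, Complex.exp (Complex.I * Complex.ofReal (t * τ)) *
            Complex.ofReal (deriv (deriv ψ) t * Real.exp (c * t) + c * (deriv ψ t * Real.exp (c * t))
              + c * (deriv ψ t * Real.exp (c * t) + c * (ψ t * Real.exp (c * t)))))
        - ∫ t in (0:ℝ)..3, Complex.exp (Complex.I * Complex.ofReal (t * τ)) *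
            Complex.ofReal (deriv (deriv ψ) t * Real.exp (-c * t) + -c * (deriv ψ t * Real.exp (-c * t))
              + -c * (deriv ψ t * Real.exp (-c * t) + -c * (ψ t * Real.exp (-c * t))))‖
      ≤ ‖2 * (c:ℂ)‖
        + ‖∫ t in (-3:ℝ)..0, Complex.exp (Complex.I * Complex.ofReal (t * τ)) *
            Complex.ofReal (deriv (deriv ψ) t * Real.exp (c * t) + c * (deriv ψ t * Real.exp (c * t))
              + c * (deriv ψ t * Real.exp (c * t) + c * (ψ t * Real.exp (c * t))))‖
        + ‖∫ t in (0:ℝ)..3, Complex.exp (Complex.I * Complex.ofReal (t * τ)) *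
            Complex.ofReal (deriv (deriv ψ) t * Real.exp (-c * t) + -c * (deriv ψ t * Real.exp (-c * t))
              + -c * (deriv ψ t * Real.exp (-c * t) + -c * (ψ t * Real.exp (-c * t))))‖ :=
    (norm_sub_le _ _).trans (add_le_add (norm_sub_le _ _) le_rfl)
  have hc2 : ‖2 * (c:ℂ)‖ = 2 * c := by
    rw [norm_mul, Complex.norm_real, Real.norm_eq_abs, abs_of_nonneg hc]
    simp
  rw [hc2] at htri
  refine le_trans htri ?_
  nlinarith [hSR, hSL]
end mainB

lemma sq_rpow_eq {T : ℝ} (hT : 0 < T) (s : ℝ) : (T^2) ^ s = T ^ (2*s) := by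
  rw [← Real.rpow_natCast T 2, ← Real.rpow_mul hT.le]
  norm_num

lemma weight_small {b T τ : ℝ} (hb0 : 0 ≤ b) (hb : b ≤ 1/2) (hT : 1 ≤ T) (hτ : |τ| ≤ T) :
    (1 + τ^2) ^ b ≤ 2 * T ^ (2*b) := by
  have hT0 : (0:ℝ) < T := lt_of_lt_of_le one_pos hT
  have h1 : 1 + τ^2 ≤ 2 * T^2 := by nlinarith [abs_nonneg τ, sq_abs τ]
  calc (1 + τ^2) ^ b ≤ (2 * T^2) ^ b :=
        Real.rpow_le_rpow (by positivity) h1 hb0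
    _ = 2 ^ b * (T^2) ^ b := Real.mul_rpow (by norm_num) (by positivity)
    _ ≤ 2 * T ^ (2*b) := by
        rw [sq_rpow_eq hT0]
        have h2 : (2:ℝ) ^ b ≤ 2 := by
          calc (2:ℝ) ^ b ≤ 2 ^ (1:ℝ) :=
            Real.rpow_le_rpow_of_exponent_le one_le_two (by linarith)
          _ = 2 := Real.rpow_one 2
        have : (0:ℝ) ≤ T ^ (2*b) := Real.rpow_nonneg hT0.le _
        nlinarith
lemma weight_large {b T τ : ℝ} (hb0 : 0 ≤ b) (hb : b ≤ 1/2) (hT : 1 ≤ T) (hτ : T < |τ|) :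
    (1 + τ^2) ^ b ≤ 2 * T ^ (2*b-1) * |τ| := by
  have hT0 : (0:ℝ) < T := lt_of_lt_of_le one_pos hT
  have hτ1 : (1:ℝ) ≤ |τ| := le_trans hT hτ.le
  have hτ0 : (0:ℝ) < |τ| := lt_of_lt_of_le one_pos hτ1
  have h1 : 1 + τ^2 ≤ 2 * |τ|^2 := by nlinarith [sq_abs τ]
  calc (1 + τ^2) ^ b ≤ (2 * |τ|^2) ^ b :=
        Real.rpow_le_rpow (by positivity) h1 hb0
    _ = 2 ^ b * (|τ|^2) ^ b := Real.mul_rpow (by norm_num) (by positivity)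
    _ ≤ 2 * |τ| ^ (2*b) := by
        rw [sq_rpow_eq hτ0]
        have h2 : (2:ℝ) ^ b ≤ 2 := by
          calc (2:ℝ) ^ b ≤ 2 ^ (1:ℝ) :=
            Real.rpow_le_rpow_of_exponent_le one_le_two (by linarith)
          _ = 2 := Real.rpow_one 2
        have : (0:ℝ) ≤ |τ| ^ (2*b) := Real.rpow_nonneg hτ0.le _
        nlinarith
    _ = 2 * (|τ| ^ (2*b-1) * |τ|) := by
        rw [← Real.rpow_add_one hτ0.ne' (2*b-1)]
        norm_num
    _ ≤ 2 * T ^ (2*b-1) * |τ| := by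
        have h3 : |τ| ^ (2*b-1) ≤ T ^ (2*b-1) :=
          Real.rpow_le_rpow_of_nonpos hT0 hτ.le (by linarith)
        rw [mul_assoc]
        exact mul_le_mul_of_nonneg_left
          (mul_le_mul_of_nonneg_right h3 hτ0.le) (by norm_num)

lemma jb_rpow (x s : ℝ) : jb x ^ (2*s) = (1 + x^2) ^ s := by
  rw [jb, Real.sqrt_eq_rpow, ← Real.rpow_mul (by positivity)]
  congr 1
  ring

lemma bound_of_compact_support {f : ℝ → ℝ} (hfc : Continuous f)
    (h0 : ∀ t, t ∉ Set.Icc (-2:ℝ) 2 → f t = 0) : ∃ M, 0 ≤ M ∧ ∀ t, |f t| ≤ M := by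
  obtain ⟨M, hM⟩ :=
    (isCompact_Icc (a := (-2:ℝ)) (b := 2)).exists_bound_of_continuousOn hfc.continuousOn
  refine ⟨max M 0, le_max_right _ _, fun t => ?_⟩
  by_cases ht : t ∈ Set.Icc (-2:ℝ) 2
  · exact le_trans (by simpa [Real.norm_eq_abs] using hM t ht) (le_max_left _ _)
  · simp [h0 t ht]

lemma psi_ev_zero_outside {ψ : ℝ → ℝ} (hsupp : Function.support ψ ⊆ Set.Icc (-2:ℝ) 2) :
    ∀ t, t ∉ Set.Icc (-2:ℝ) 2 → ψ =ᶠ[nhds t] (fun _ => (0:ℝ)) := by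
  intro t ht
  rw [Set.mem_Icc, not_and_or, not_le, not_le] at ht
  rcases ht with h | h
  · filter_upwards [Iio_mem_nhds h] with s hs
    by_contra hne
    have h2 := hsupp hne
    rw [Set.mem_Icc] at h2
    simp only [Set.mem_Iio] at hs
    linarith [h2.1]
  · filter_upwards [Ioi_mem_nhds h] with s hs
    by_contra hne
    have h2 := hsupp hne
    rw [Set.mem_Icc] at h2
    simp only [Set.mem_Ioi] at hs
    linarith [h2.2]


end HeatAux
open MeasureTheory intervalIntegral Set Filter in
/-- Weighted `L²` bound on the localized heat factor. -/
theorem heat_factor_weighted_L2 (ψ : ℝ → ℝ) (hψ : IsCutoff ψ)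
    (b : ℝ) (hb0 : 0 ≤ b) (hb : b ≤ 1/2) :
    ∃ C : ℝ, 0 < C ∧ ∀ ξ : ℝ,
      (∫⁻ τ : ℝ, ENNReal.ofReal (jb τ ^ (2 * b)) *
          (‖fourier1 (fun t => (ψ t : ℂ) *
              Complex.exp (Complex.ofReal (-(|t| * ξ ^ 2)))) τ‖₊ : ℝ≥0∞) ^ 2) ^ ((1:ℝ)/2)
        ≤ ENNReal.ofReal (C * jb ξ ^ (2 * b - 1)) := by
  obtain ⟨hsm, hsupp, hone⟩ := hψ
  have hψc : Continuous ψ := hsm.continuous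
  have hsm1 : ContDiff ℝ (⊤ : ℕ∞) (deriv ψ) := (contDiff_infty_iff_deriv.mp hsm).2
  have hev := psi_ev_zero_outside hsupp
  have hψ0 : ∀ t, t ∉ Set.Icc (-2:ℝ) 2 → ψ t = 0 := fun t ht => (hev t ht).eq_of_nhds
  have hd1ev : ∀ t, t ∉ Set.Icc (-2:ℝ) 2 → deriv ψ =ᶠ[nhds t] (fun _ => (0:ℝ)) := by
    intro t ht
    have := (hev t ht).deriv
    simpa using this
  have hd1 : ∀ t, t ∉ Set.Icc (-2:ℝ) 2 → deriv ψ t = 0 := fun t ht => (hd1ev t ht).eq_of_nhds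
  have hd2 : ∀ t, t ∉ Set.Icc (-2:ℝ) 2 → deriv (deriv ψ) t = 0 := by
    intro t ht
    have := (hd1ev t ht).deriv
    simpa using this.eq_of_nhds
  obtain ⟨M₀, hM₀0, hM₀⟩ := bound_of_compact_support hψc hψ0
  obtain ⟨M₁, hM₁0, hM₁⟩ := bound_of_compact_support hsm1.continuous hd1
  obtain ⟨M₂, hM₂0, hM₂⟩ :=
    bound_of_compact_support (contDiff_infty_iff_deriv.mp hsm1).2.continuous hd2
  set D : ℝ := 2 + 6*M₂ + 12*M₁ + 2*M₀ with hDdef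
  set K : ℝ := 4*(12*M₀)^2 + 2*D^2 with hKdef
  have hD2 : (2:ℝ) ≤ D := by rw [hDdef]; linarith
  have hK0 : (0:ℝ) < K := by rw [hKdef]; nlinarith
  refine ⟨Real.sqrt K, Real.sqrt_pos.2 hK0, fun ξ => ?_⟩
  have hT0 : (0:ℝ) < 1 + ξ^2 := by positivity
  have hT1 : (1:ℝ) ≤ 1 + ξ^2 := by nlinarith [sq_nonneg ξ]
  have hfun : (fun t => (ψ t : ℂ) * Complex.exp (Complex.ofReal (-(|t| * ξ ^ 2))))
      = (fun t => ((ψ t * Real.exp (-(|t| * ξ^2)) : ℝ) : ℂ)) := by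
    funext t
    push_cast
    ring
  simp only [hfun, jb_rpow]
  set F : ℝ → ℂ := fourier1 (fun t => ((ψ t * Real.exp (-(|t| * ξ^2)) : ℝ) : ℂ)) with hFdef
  have hF1 : ∀ τ, ‖F τ‖ ≤ 12*M₀/(1+ξ^2) := fun τ => normF_le hsm hsupp hM₀ (sq_nonneg ξ) τ
  have hF2 : ∀ τ, τ^2 * ‖F τ‖ ≤ D*(1+ξ^2) :=
    fun τ => tau_sq_normF_le hsm hsupp hone hM₀ hM₁ hM₂ (sq_nonneg ξ) τ
  set G : ℝ → ℝ≥0∞ := fun τ => ENNReal.ofReal ((1 + τ^2) ^ b) * ((‖F τ‖₊ : ℝ≥0∞)) ^ 2 with hGdef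
  -- bound on the inner region
  have hgs : ∀ τ ∈ Set.Icc (-(1+ξ^2)) (1+ξ^2),
      G τ ≤ ENNReal.ofReal (2*(1+ξ^2)^(2*b) * (12*M₀/(1+ξ^2))^2) := by
    intro τ hτ
    rw [ENNReal.ofReal_mul (by positivity)]
    refine mul_le_mul' (ENNReal.ofReal_le_ofReal
      (weight_small hb0 hb hT1 (abs_le.2 ⟨hτ.1, hτ.2⟩))) ?_
    calc ((‖F τ‖₊ : ℝ≥0∞))^2 = (ENNReal.ofReal ‖F τ‖)^2 := by
          rw [ofReal_norm, enorm_eq_nnnorm]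
      _ ≤ (ENNReal.ofReal (12*M₀/(1+ξ^2)))^2 :=
          pow_le_pow_left' (ENNReal.ofReal_le_ofReal (hF1 τ)) 2
      _ = ENNReal.ofReal ((12*M₀/(1+ξ^2))^2) := (ENNReal.ofReal_pow (by positivity) 2).symm
  have hIcc : ∫⁻ τ in Set.Icc (-(1+ξ^2)) (1+ξ^2), G τ
      ≤ ENNReal.ofReal (4*(12*M₀)^2 * (1+ξ^2)^(2*b-1)) := by
    calc ∫⁻ τ in Set.Icc (-(1+ξ^2)) (1+ξ^2), G τ
        ≤ ∫⁻ _ in Set.Icc (-(1+ξ^2)) (1+ξ^2),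
            ENNReal.ofReal (2*(1+ξ^2)^(2*b) * (12*M₀/(1+ξ^2))^2) :=
          setLIntegral_mono' measurableSet_Icc hgs
      _ = ENNReal.ofReal (2*(1+ξ^2)^(2*b) * (12*M₀/(1+ξ^2))^2) * volume (Set.Icc (-(1+ξ^2)) (1+ξ^2)) :=
          setLIntegral_const _ _
      _ = ENNReal.ofReal (2*(1+ξ^2)^(2*b) * (12*M₀/(1+ξ^2))^2) * ENNReal.ofReal (2*(1+ξ^2)) := by
          rw [Real.volume_Icc]
          congr 1
          ring
      _ = ENNReal.ofReal (2*(1+ξ^2)^(2*b) * (12*M₀/(1+ξ^2))^2 * (2*(1+ξ^2))) :=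
          (ENNReal.ofReal_mul (by positivity)).symm
      _ = ENNReal.ofReal (4*(12*M₀)^2 * (1+ξ^2)^(2*b-1)) := by
          congr 1
          have hX : (1+ξ^2)^(2*b-1) = (1+ξ^2)^(2*b) / (1+ξ^2) := by
            rw [Real.rpow_sub hT0, Real.rpow_one]
          rw [hX]
          have hTne : (1+ξ^2) ≠ 0 := ne_of_gt hT0
          generalize (1+ξ^2)^(2*b) = Y
          field_simp
          ring
  -- pointwise bound on the outer region
  have hptw : ∀ τ : ℝ, (1+ξ^2) < |τ| →
      G τ ≤ ENNReal.ofReal (2*D^2*(1+ξ^2)^(2*b+1) * |τ|^(-3:ℝ)) := by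
    intro τ hτ
    have hτ0 : (0:ℝ) < |τ| := lt_trans hT0 hτ
    have hτne : τ ≠ 0 := fun h => by simp [h] at hτ0
    have hτsq : (0:ℝ) < τ^2 := by positivity
    have hFb : ‖F τ‖ ≤ D*(1+ξ^2)/τ^2 := by
      rw [le_div_iff₀ hτsq]
      calc ‖F τ‖ * τ^2 = τ^2 * ‖F τ‖ := by ring
        _ ≤ D*(1+ξ^2) := hF2 τ
    have hid : 2*(1+ξ^2)^(2*b-1)*|τ| * (D*(1+ξ^2)/τ^2)^2
        = 2*D^2*(1+ξ^2)^(2*b+1) * |τ|^(-3:ℝ) := by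
      have h1 : (1+ξ^2)^(2*b+1) = (1+ξ^2)^(2*b-1) * (1+ξ^2)^2 := by
        rw [← Real.rpow_natCast (1+ξ^2) 2, ← Real.rpow_add hT0]
        congr 1
        push_cast
        ring
      have h2 : |τ|^(-3:ℝ) = (|τ|^3)⁻¹ := by
        rw [show (-3:ℝ) = -((3:ℕ):ℝ) by push_cast; ring, Real.rpow_neg (abs_nonneg τ),
          Real.rpow_natCast]
      have h3 : τ^2 = |τ|^2 := (sq_abs τ).symm
      have habs : |τ| ≠ 0 := ne_of_gt hτ0
      rw [h1, h2, h3]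
      generalize hgen : |τ| = u
      have hune : u ≠ 0 := hgen ▸ habs
      generalize (1+ξ^2)^(2*b-1) = Y
      field_simp
    calc G τ ≤ ENNReal.ofReal (2*(1+ξ^2)^(2*b-1)*|τ|) * ENNReal.ofReal ((D*(1+ξ^2)/τ^2)^2) := by
          refine mul_le_mul' (ENNReal.ofReal_le_ofReal (weight_large hb0 hb hT1 hτ)) ?_
          calc ((‖F τ‖₊ : ℝ≥0∞))^2 = (ENNReal.ofReal ‖F τ‖)^2 := by
                rw [ofReal_norm, enorm_eq_nnnorm]
            _ ≤ (ENNReal.ofReal (D*(1+ξ^2)/τ^2))^2 :=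
                pow_le_pow_left' (ENNReal.ofReal_le_ofReal hFb) 2
            _ = ENNReal.ofReal ((D*(1+ξ^2)/τ^2)^2) := (ENNReal.ofReal_pow (by positivity) 2).symm
      _ = ENNReal.ofReal (2*D^2*(1+ξ^2)^(2*b+1) * |τ|^(-3:ℝ)) := by
          rw [← ENNReal.ofReal_mul (by positivity), hid]
  -- value of the outer majorant integral
  have hval : ∫⁻ τ in Set.Ioi (1+ξ^2), ENNReal.ofReal (2*D^2*(1+ξ^2)^(2*b+1) * |τ|^(-3:ℝ))
      ≤ ENNReal.ofReal (D^2*(1+ξ^2)^(2*b-1)) := by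
    have hcongr : ∫⁻ τ in Set.Ioi (1+ξ^2), ENNReal.ofReal (2*D^2*(1+ξ^2)^(2*b+1) * |τ|^(-3:ℝ))
        = ∫⁻ τ in Set.Ioi (1+ξ^2), ENNReal.ofReal (2*D^2*(1+ξ^2)^(2*b+1) * τ^(-3:ℝ)) := by
      apply setLIntegral_congr_fun measurableSet_Ioi
      intro τ hτ
      beta_reduce
      rw [abs_of_pos (lt_trans hT0 hτ)]
    rw [hcongr]
    have hint : IntegrableOn (fun τ : ℝ => 2*D^2*(1+ξ^2)^(2*b+1) * τ^(-3:ℝ)) (Set.Ioi (1+ξ^2)) :=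
      (integrableOn_Ioi_rpow_of_lt (by norm_num) hT0).const_mul _
    rw [← ofReal_integral_eq_lintegral_ofReal hint ?hnn]
    case hnn =>
      filter_upwards [ae_restrict_mem measurableSet_Ioi] with τ hτ
      have : (0:ℝ) < τ := lt_trans hT0 hτ
      have := Real.rpow_nonneg this.le (-3:ℝ)
      positivity
    rw [MeasureTheory.integral_const_mul, integral_Ioi_rpow_of_lt (by norm_num) hT0]
    apply ENNReal.ofReal_le_ofReal
    refine le_of_eq ?_
    have hpow : (1+ξ^2)^(2*b+1) * (1+ξ^2)^((-3:ℝ)+1) = (1+ξ^2)^(2*b-1) := by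
      rw [← Real.rpow_add hT0]
      congr 1
      ring
    calc 2*D^2*(1+ξ^2)^(2*b+1) * (-(1+ξ^2)^((-3:ℝ)+1)/((-3:ℝ)+1))
        = D^2 * ((1+ξ^2)^(2*b+1) * (1+ξ^2)^((-3:ℝ)+1)) := by ring
      _ = D^2*(1+ξ^2)^(2*b-1) := by rw [hpow]
  -- outer region bound
  have hIoi : ∫⁻ τ in Set.Ioi (1+ξ^2), G τ ≤ ENNReal.ofReal (D^2*(1+ξ^2)^(2*b-1)) := by
    refine le_trans (setLIntegral_mono' measurableSet_Ioi fun τ hτ => hptw τ ?_) hval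
    rw [abs_of_pos (lt_trans hT0 hτ)]
    exact hτ
  have hIio : ∫⁻ τ in Set.Iio (-(1+ξ^2)), G τ ≤ ENNReal.ofReal (D^2*(1+ξ^2)^(2*b-1)) := by
    have hmono : ∫⁻ τ in Set.Iio (-(1+ξ^2)), G τ
        ≤ ∫⁻ τ in Set.Iio (-(1+ξ^2)), ENNReal.ofReal (2*D^2*(1+ξ^2)^(2*b+1) * |τ|^(-3:ℝ)) := by
      refine setLIntegral_mono' measurableSet_Iio fun τ hτ => hptw τ ?_
      have : τ < -(1+ξ^2) := hτ
      calc (1+ξ^2) < -τ := by linarith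
        _ ≤ |τ| := neg_le_abs τ
    refine hmono.trans (le_trans (le_of_eq ?_) hval)
    have hpre : (Neg.neg : ℝ → ℝ) ⁻¹' (Set.Iio (-(1+ξ^2))) = Set.Ioi (1+ξ^2) := by
      ext x
      simp only [Set.mem_preimage, Set.mem_Iio, Set.mem_Ioi, neg_lt_neg_iff]
    have hcomp := (Measure.measurePreserving_neg (volume : Measure ℝ)).setLIntegral_comp_preimage_emb
      (MeasurableEquiv.neg ℝ).measurableEmbedding
      (fun τ : ℝ => ENNReal.ofReal (2*D^2*(1+ξ^2)^(2*b+1) * |τ|^(-3:ℝ))) (Set.Iio (-(1+ξ^2)))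
    rw [hpre] at hcomp
    rw [← hcomp]
    apply setLIntegral_congr_fun measurableSet_Ioi
    intro τ hτ
    simp [abs_neg]
  -- put everything together
  have hcompl_eq : (Set.Icc (-(1+ξ^2)) (1+ξ^2))ᶜ = Set.Iio (-(1+ξ^2)) ∪ Set.Ioi (1+ξ^2) := by
    ext x
    simp only [Set.mem_compl_iff, Set.mem_Icc, not_and_or, not_le, Set.mem_union,
      Set.mem_Iio, Set.mem_Ioi]
  have htotal : ∫⁻ τ, G τ ≤ ENNReal.ofReal (K * (1+ξ^2)^(2*b-1)) := by
    rw [← lintegral_add_compl (f := G) (μ := volume) (measurableSet_Icc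
      (a := -(1+ξ^2)) (b := (1+ξ^2)))]
    have hc : ∫⁻ τ in (Set.Icc (-(1+ξ^2)) (1+ξ^2))ᶜ, G τ
        ≤ ENNReal.ofReal (D^2*(1+ξ^2)^(2*b-1)) + ENNReal.ofReal (D^2*(1+ξ^2)^(2*b-1)) := by
      rw [hcompl_eq]
      exact le_trans (lintegral_union_le _ _ _) (add_le_add hIio hIoi)
    calc (∫⁻ τ in Set.Icc (-(1+ξ^2)) (1+ξ^2), G τ) + ∫⁻ τ in (Set.Icc (-(1+ξ^2)) (1+ξ^2))ᶜ, G τ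
        ≤ ENNReal.ofReal (4*(12*M₀)^2 * (1+ξ^2)^(2*b-1))
          + (ENNReal.ofReal (D^2*(1+ξ^2)^(2*b-1)) + ENNReal.ofReal (D^2*(1+ξ^2)^(2*b-1))) :=
          add_le_add hIcc hc
      _ = ENNReal.ofReal (K * (1+ξ^2)^(2*b-1)) := by
          rw [← ENNReal.ofReal_add (by positivity) (by positivity),
            ← ENNReal.ofReal_add (by positivity) (by positivity)]
          congr 1
          rw [hKdef]
          ring
  calc (∫⁻ τ, G τ) ^ ((1:ℝ)/2) ≤ (ENNReal.ofReal (K * (1+ξ^2)^(2*b-1))) ^ ((1:ℝ)/2) :=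
        ENNReal.rpow_le_rpow htotal (by norm_num)
    _ = ENNReal.ofReal ((K * (1+ξ^2)^(2*b-1)) ^ ((1:ℝ)/2)) :=
        ENNReal.ofReal_rpow_of_nonneg (by positivity) (by norm_num)
    _ = ENNReal.ofReal (Real.sqrt K * jb ξ ^ (2*b-1)) := by
        congr 1
        rw [← Real.sqrt_eq_rpow, Real.sqrt_mul hK0.le]
        congr 1
        rw [jb, Real.sqrt_eq_rpow, Real.sqrt_eq_rpow, ← Real.rpow_mul hT0.le,
          ← Real.rpow_mul (by positivity)]
        congr 1
        ring
end

section
/- Resonance lower bound for KP-II: Let τ, τ₁, η, η₁ ∈ ℝ and ξ, ξ₁ ∈ ℝ with ξ ≠ 0, ξ₁ ≠ 0 and ξ ≠ ξ₁. Set σ = τ - P(ξ,η), σ₁ = τ₁ - P(ξ₁,η₁), and σ₂ = (τ-τ₁) - P(ξ-ξ₁, η-η₁). Then max(|σ|, |σ₁|, |σ₂|) ≥ |σ₁ + σ₂ - σ| / 3 ≥ |ξ ξ₁ (ξ - ξ₁)|. -/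
open MeasureTheory Filter
open scoped ENNReal NNReal

/-- Resonance lower bound for KP-II. -/
theorem resonance_lower_bound (τ τ₁ η η₁ ξ ξ₁ : ℝ)
    (hξ : ξ ≠ 0) (hξ₁ : ξ₁ ≠ 0) (hne : ξ ≠ ξ₁) :
    max (max |τ - Pk (ξ, η)| |τ₁ - Pk (ξ₁, η₁)|) |(τ - τ₁) - Pk (ξ - ξ₁, η - η₁)| ≥
      |(τ₁ - Pk (ξ₁, η₁)) + ((τ - τ₁) - Pk (ξ - ξ₁, η - η₁)) - (τ - Pk (ξ, η))| / 3 ∧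
    |(τ₁ - Pk (ξ₁, η₁)) + ((τ - τ₁) - Pk (ξ - ξ₁, η - η₁)) - (τ - Pk (ξ, η))| / 3 ≥
      |ξ * ξ₁ * (ξ - ξ₁)| := by
  set a := τ₁ - Pk (ξ₁, η₁) with ha
  set b := (τ - τ₁) - Pk (ξ - ξ₁, η - η₁) with hb
  set c := τ - Pk (ξ, η) with hc
  have hd : ξ * ξ₁ * (ξ - ξ₁) ≠ 0 := by
    apply mul_ne_zero (mul_ne_zero hξ hξ₁) (sub_ne_zero.mpr hne)
  have hsub : ξ - ξ₁ ≠ 0 := sub_ne_zero.mpr hne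
  constructor
  · have h1 : |a + b - c| ≤ |a| + |b| + |c| := by
      calc |a + b - c| ≤ |a + b| + |c| := abs_sub _ _
        _ ≤ |a| + |b| + |c| := by gcongr; exact abs_add_le _ _
    have h2 : |c| ≤ max (max |c| |a|) |b| := le_max_of_le_left (le_max_left _ _)
    have h3 : |a| ≤ max (max |c| |a|) |b| := le_max_of_le_left (le_max_right _ _)
    have h4 : |b| ≤ max (max |c| |a|) |b| := le_max_right _ _
    rw [ge_iff_le, div_le_iff₀ (by norm_num : (0:ℝ) < 3)]
    linarith
  · have key : (a + b - c) * (ξ * ξ₁ * (ξ - ξ₁)) =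
        3 * (ξ * ξ₁ * (ξ - ξ₁)) ^ 2 + (η * ξ₁ - η₁ * ξ) ^ 2 := by
      simp only [ha, hb, hc, Pk]
      field_simp
      ring
    have h5 : |a + b - c| * |ξ * ξ₁ * (ξ - ξ₁)| = 3 * (ξ * ξ₁ * (ξ - ξ₁)) ^ 2 + (η * ξ₁ - η₁ * ξ) ^ 2 := by
      rw [← abs_mul, key, abs_of_nonneg (by positivity)]
    have h6 : 3 * |ξ * ξ₁ * (ξ - ξ₁)| * |ξ * ξ₁ * (ξ - ξ₁)| ≤ |a + b - c| * |ξ * ξ₁ * (ξ - ξ₁)| := by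
      rw [h5]
      have : |ξ * ξ₁ * (ξ - ξ₁)| * |ξ * ξ₁ * (ξ - ξ₁)| = (ξ * ξ₁ * (ξ - ξ₁)) ^ 2 := by
        rw [← abs_mul, ← sq, abs_of_nonneg (by positivity)]
      nlinarith [sq_nonneg (η * ξ₁ - η₁ * ξ)]
    have hpos : 0 < |ξ * ξ₁ * (ξ - ξ₁)| := abs_pos.mpr hd
    rw [ge_iff_le, le_div_iff₀ (by norm_num : (0:ℝ) < 3)]
    calc |ξ * ξ₁ * (ξ - ξ₁)| * 3 = 3 * |ξ * ξ₁ * (ξ - ξ₁)| * |ξ * ξ₁ * (ξ - ξ₁)| / |ξ * ξ₁ * (ξ - ξ₁)| := by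
          field_simp
      _ ≤ |a + b - c| * |ξ * ξ₁ * (ξ - ξ₁)| / |ξ * ξ₁ * (ξ - ξ₁)| := by gcongr
      _ = |a + b - c| := by field_simp
end

section
/- Resonance function bound on the counterexample frequency set: Define χ(ξ, ξ₁, η, η₁) = 3ξξ₁(ξ-ξ₁) + (ηξ₁ - η₁ξ)² / (ξξ₁(ξ-ξ₁)) for ξ, ξ₁, ξ-ξ₁ all nonzero. For N > 0 let D_{1,N} = [N/2, N] × [-6N², 6N²] and D_{2,N} = [N, 2N] × [√3 N², (√3+1) N²], and for (ξ,η) ∈ ℝ² let k(ξ,η) be the set of (ξ₁,η₁) ∈ ℝ² such that either ((ξ₁,η₁) ∈ D_{2,N} and (ξ-ξ₁, η-η₁) ∈ D_{1,N}) or ((ξ₁,η₁) ∈ D_{1,N} and (ξ-ξ₁, η-η₁) ∈ D_{2,N}). Then there exist C > 0 and N₀ > 0 such that for all N ≥ N₀, all (ξ,η) ∈ ℝ², and all (ξ₁,η₁) ∈ k(ξ,η), |χ(ξ, ξ₁, η, η₁)| ≤ C N³. -/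
open MeasureTheory Filter
open scoped ENNReal NNReal

/-!
Write `ξ = a + b`, `η = p + q` with `(a, p) = (ξ₁, η₁)`. Then `χ = 3(a+b)ab + (qa - pb)²/((a+b)ab)`.
On both rectangles `a, b ∈ [N/2, 2N]` and `|p|, |q| ≤ 6N²`, so the denominator `(a+b)ab` is of
size `N³` while `|qa - pb| ≲ N³`; hence each term of `χ` is `O(N³)`.
-/

open Set

lemma chiRes_add_add (a b p q : ℝ) :
    chiRes (a + b) a (p + q) p = 3 * (a + b) * a * b + (q * a - p * b) ^ 2 / ((a + b) * a * b) := by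
  unfold chiRes
  ring

lemma abs_chiRes_add_add_le {N K a b p q : ℝ} (hN : 0 < N)
    (ha : a ∈ Icc (N / 2) (2 * N)) (hb : b ∈ Icc (N / 2) (2 * N))
    (hp : |p| ≤ K * N ^ 2) (hq : |q| ≤ K * N ^ 2) :
    |chiRes (a + b) a (p + q) p| ≤ (48 + 64 * K ^ 2) * N ^ 3 := by
  obtain ⟨ha₁, ha₂⟩ := ha
  obtain ⟨hb₁, hb₂⟩ := hb
  have ha₀ : 0 < a := by linarith
  have hb₀ : 0 < b := by linarith
  have hKN : 0 ≤ K * N ^ 2 := (abs_nonneg p).trans hp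
  have hden : N ^ 3 / 4 ≤ (a + b) * a * b :=
    calc N ^ 3 / 4 = N * (N / 2) * (N / 2) := by ring
      _ ≤ (a + b) * a * b := by gcongr; linarith
  have hcross : |q * a - p * b| ≤ 4 * K * N ^ 3 :=
    calc |q * a - p * b| ≤ |q| * |a| + |p| * |b| := by
          rw [← abs_mul, ← abs_mul]; exact abs_sub _ _
      _ ≤ K * N ^ 2 * (2 * N) + K * N ^ 2 * (2 * N) := by
          rw [abs_of_pos ha₀, abs_of_pos hb₀]; gcongr
      _ = 4 * K * N ^ 3 := by ring
  have hfrac : (q * a - p * b) ^ 2 / ((a + b) * a * b) ≤ 64 * K ^ 2 * N ^ 3 := by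
    rw [div_le_iff₀ (by positivity)]
    calc (q * a - p * b) ^ 2 = |q * a - p * b| ^ 2 := (sq_abs _).symm
      _ ≤ (4 * K * N ^ 3) ^ 2 := by gcongr
      _ = 64 * K ^ 2 * N ^ 3 * (N ^ 3 / 4) := by ring
      _ ≤ 64 * K ^ 2 * N ^ 3 * ((a + b) * a * b) := by gcongr
  have hmain : 3 * (a + b) * a * b ≤ 48 * N ^ 3 :=
    calc 3 * (a + b) * a * b ≤ 3 * (2 * N + 2 * N) * (2 * N) * (2 * N) := by gcongr
      _ = 48 * N ^ 3 := by ring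
  rw [chiRes_add_add, abs_of_nonneg (by positivity)]
  linarith

lemma inD1.bounds {N a p : ℝ} (h : inD1 N a p) :
    a ∈ Icc (N / 2) (2 * N) ∧ |p| ≤ 6 * N ^ 2 := by
  obtain ⟨⟨ha₁, ha₂⟩, hp⟩ := h
  exact ⟨⟨ha₁, by linarith⟩, abs_le.2 hp⟩

lemma inD2.bounds {N a p : ℝ} (h : inD2 N a p) :
    a ∈ Icc (N / 2) (2 * N) ∧ |p| ≤ 6 * N ^ 2 := by
  obtain ⟨⟨ha₁, ha₂⟩, hp₁, hp₂⟩ := h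
  have hN : 0 ≤ N := by linarith
  have hsqrt : 0 ≤ Real.sqrt 3 * N ^ 2 := by positivity
  have hsqrt' : (Real.sqrt 3 + 1) * N ^ 2 ≤ 6 * N ^ 2 := by
    have : Real.sqrt 3 ≤ 2 := by
      rw [Real.sqrt_le_left (by norm_num)]; norm_num
    gcongr; linarith
  exact ⟨⟨by linarith, ha₂⟩, abs_le.2 ⟨by linarith, by linarith⟩⟩

/-- Bound on the resonance function on the counterexample frequency set. -/
theorem resonance_bound_counterexample :
    ∃ C : ℝ, 0 < C ∧ ∃ N₀ : ℝ, 0 < N₀ ∧ ∀ N : ℝ, N₀ ≤ N →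
      ∀ ξ η ξ₁ η₁ : ℝ,
        ((inD2 N ξ₁ η₁ ∧ inD1 N (ξ - ξ₁) (η - η₁)) ∨
          (inD1 N ξ₁ η₁ ∧ inD2 N (ξ - ξ₁) (η - η₁))) →
        |chiRes ξ ξ₁ η η₁| ≤ C * N ^ 3 := by
  refine ⟨48 + 64 * 6 ^ 2, by norm_num, 1, one_pos, fun N hN ξ η ξ₁ η₁ h => ?_⟩
  obtain ⟨⟨ha, hp⟩, hb, hq⟩ :
      (ξ₁ ∈ Icc (N / 2) (2 * N) ∧ |η₁| ≤ 6 * N ^ 2) ∧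
        (ξ - ξ₁ ∈ Icc (N / 2) (2 * N) ∧ |η - η₁| ≤ 6 * N ^ 2) := by
    rcases h with ⟨h₁, h₂⟩ | ⟨h₁, h₂⟩
    exacts [⟨h₁.bounds, h₂.bounds⟩, ⟨h₁.bounds, h₂.bounds⟩]
  simpa using abs_chiRes_add_add_le (by linarith) ha hb hp hq
end
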